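/- arXiv:1603.07926 — 2 statements merged into one kernel-verified Lean document; each statement's English description precedes it below -/
import Mathlib

section
/- Suppose for every chain length h and every fork depth d ≥ n the probability of a rollback of depth d is at most e^{-c·n} for some constant c > 0 (depending on δ³ as in the common-prefix property). Then a light verifier starting from the state snapshot n blocks before the tip and applying the last n full blocks obtains the same final state as a full verifier applying all blocks from genesis, with probability at least 1 - e^{-c·n}, assuming the authenticated dictionary's root commitment is second-preimage resistant (modeled as: equal roots imply equal states). -/
/-!
Outside the fork event, second-preimage resistance turns the equality of roots into an
equality of states: the snapshot is the genesis state folded over all but the last `n`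
blocks, so folding the last `n` blocks onto it reproduces the fold over the whole chain.
Hence the verifiers can only disagree on the fork event, whose probability is at most
`e^{-c·n}`.
-/

open MeasureTheory

theorem List.foldl_drop_foldl_take {α β : Type*} (f : α → β → α) (a : α) (l : List β) (k : ℕ) :
    (l.drop k).foldl f ((l.take k).foldl f a) = l.foldl f a := by
  rw [← List.foldl_append, List.take_append_drop]

theorem MeasureTheory.one_sub_measure_le_of_compl_subset {Ω : Type*} [MeasurableSpace Ω]
    {μ : Measure Ω} [IsProbabilityMeasure μ] {s t : Set Ω} (h : sᶜ ⊆ t) :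
    1 - μ s ≤ μ t :=
  calc 1 - μ s ≤ μ sᶜ := tsub_le_iff_left.2 (by simpa using measure_univ_le_add_compl (μ := μ) s)
    _ ≤ μ t := measure_mono h

theorem stmt5_general {Ω : Type*} [MeasurableSpace Ω] (P : Measure Ω) [IsProbabilityMeasure P]
    {State Block Digest : Type*}
    (apply : State → Block → State) (root : State → Digest) (genesis : State)
    (hroot : ∀ S S' : State, root S = root S' → S = S')  -- second-preimage security
    (c : ℝ) (n : ℕ)
    (chain : Ω → List Block) (snapshot : Ω → State)
    (full light : Ω → State)
    (hfull : ∀ ω, full ω = (chain ω).foldl apply genesis)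
    (Fork : Set Ω)
    (hFork : P Fork ≤ ENNReal.ofReal (Real.exp (-(c * n))))
    (hsnap : ∀ ω ∉ Fork,
      root (snapshot ω)
        = root (((chain ω).take ((chain ω).length - n)).foldl apply genesis))
    (hlight : ∀ ω ∉ Fork,
      light ω = ((chain ω).drop ((chain ω).length - n)).foldl apply (snapshot ω)) :
    P {ω | light ω = full ω} ≥ 1 - ENNReal.ofReal (Real.exp (-(c * n))) := by
  have hagree : Forkᶜ ⊆ {ω | light ω = full ω} := fun ω hω => by
    rw [Set.mem_ofPred_eq, hlight ω hω, hroot _ _ (hsnap ω hω), List.foldl_drop_foldl_take, hfull]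
  calc 1 - ENNReal.ofReal (Real.exp (-(c * n))) ≤ 1 - P Fork := tsub_le_tsub_left hFork 1
    _ ≤ P {ω | light ω = full ω} := one_sub_measure_le_of_compl_subset hagree

/-- Light-verifier security: if a rollback (fork) deeper than `n` occurs with
probability at most `e^{-c·n}`, the authenticated dictionary root is
second-preimage resistant (equal roots imply equal states), and outside the fork
event the light verifier's downloaded snapshot has the root committed at height
`h - n` and it applies the last `n` blocks, then the light verifier obtains the
full verifier's state (fold of block application from genesis over the whole
chain) with probability at least `1 - e^{-c·n}`. -/
theorem stmt5 {Ω : Type*} [MeasurableSpace Ω] (P : Measure Ω) [IsProbabilityMeasure P]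
    {State Block Digest : Type*}
    (apply : State → Block → State) (root : State → Digest) (genesis : State)
    (hroot : ∀ S S' : State, root S = root S' → S = S')  -- second-preimage security
    (c : ℝ) (hc : 0 < c) (n : ℕ)
    (chain : Ω → List Block) (snapshot : Ω → State)
    (full light : Ω → State)
    (hfull : ∀ ω, full ω = (chain ω).foldl apply genesis)
    (Fork : Set Ω)
    (hFork : P Fork ≤ ENNReal.ofReal (Real.exp (-(c * n))))
    (hsnap : ∀ ω ∉ Fork,
      root (snapshot ω)
        = root (((chain ω).take ((chain ω).length - n)).foldl apply genesis))
    (hlight : ∀ ω ∉ Fork,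
      light ω = ((chain ω).drop ((chain ω).length - n)).foldl apply (snapshot ω)) :
    P {ω | light ω = full ω} ≥ 1 - ENNReal.ofReal (Real.exp (-(c * n))) :=
  stmt5_general P apply root genesis hroot c n chain snapshot full light hfull Fork hFork hsnap
    hlight
end

section
/- In a valid block, the coinbase box value equals constReward plus the total fees, where the fee of each non-coinbase transaction is the sum of values of the boxes it removes minus the sum of values of the boxes it creates. Consequently, if every non-coinbase transaction has nonnegative fee, the total value of all boxes in the state after applying the block equals the total value before the block plus constReward. -/
open Finset

theorem sum_sdiff_biUnion_union_biUnion {α ι β : Type*} [DecidableEq α] [AddCommGroup β]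
    (f : α → β) {S : Finset α} {I : Finset ι} {rem cre : ι → Finset α}
    (hrem_sub : ∀ i ∈ I, rem i ⊆ S)
    (hrem_disj : (I : Set ι).PairwiseDisjoint rem)
    (hcre_disj : (I : Set ι).PairwiseDisjoint cre)
    (hcre_fresh : ∀ i ∈ I, Disjoint (cre i) (S \ I.biUnion rem)) :
    ∑ b ∈ (S \ I.biUnion rem) ∪ I.biUnion cre, f b
      = ∑ b ∈ S, f b - ∑ i ∈ I, (∑ b ∈ rem i, f b - ∑ b ∈ cre i, f b) := by
  have hkept_fresh : Disjoint (S \ I.biUnion rem) (I.biUnion cre) :=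
    (disjoint_biUnion_right _ _ _).2 fun i hi => (hcre_fresh i hi).symm
  rw [sum_union hkept_fresh, sum_sdiff_eq_sub (biUnion_subset.2 hrem_sub),
    sum_biUnion hrem_disj, sum_biUnion hcre_disj, sum_sub_distrib]
  abel

theorem stmt8_general {Box ι : Type*} [DecidableEq Box]
    (value : Box → ℕ) (constReward : ℤ)
    (S : Finset Box) (I : Finset ι) (rem cre : ι → Finset Box) (cb : Box)
    (fee : ι → ℤ)
    (hfee_def : ∀ i ∈ I, fee i = (∑ b ∈ rem i, (value b : ℤ)) - ∑ b ∈ cre i, (value b : ℤ))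
    (hrem_sub : ∀ i ∈ I, rem i ⊆ S)
    (hrem_disj : ∀ i ∈ I, ∀ j ∈ I, i ≠ j → Disjoint (rem i) (rem j))
    (hcre_disj : ∀ i ∈ I, ∀ j ∈ I, i ≠ j → Disjoint (cre i) (cre j))
    (hcre_fresh : ∀ i ∈ I, Disjoint (cre i) (S \ I.biUnion rem))
    (hcb_fresh : cb ∉ (S \ I.biUnion rem) ∪ I.biUnion cre)
    (hcoinbase : (value cb : ℤ) = constReward + ∑ i ∈ I, fee i) :
    (∑ b ∈ (S \ I.biUnion rem) ∪ I.biUnion cre ∪ {cb}, (value b : ℤ))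
      = (∑ b ∈ S, (value b : ℤ)) + constReward := by
  rw [sum_union (disjoint_singleton_right.2 hcb_fresh), sum_singleton,
    sum_sdiff_biUnion_union_biUnion _ hrem_sub (fun i hi j hj hij => hrem_disj i hi j hj hij)
      (fun i hi j hj hij => hcre_disj i hi j hj hij) hcre_fresh,
    hcoinbase, ← sum_congr rfl hfee_def]
  ring

/-- Value conservation for a valid block. Transactions are indexed by `I`; `rem i`
are the boxes opened and `cre i` the boxes created by transaction `i`; the
coinbase creates the single box `cb`. If removed boxes are in the state and
pairwise disjoint, created boxes (and the coinbase box) are fresh and pairwise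
disjoint, every fee `∑ rem i - ∑ cre i` is nonnegative, and the coinbase value
equals `constReward` plus the total fees, then the total value after applying
the block equals the total value before plus `constReward`. -/
theorem stmt8 {Box ι : Type*} [DecidableEq Box] [DecidableEq ι]
    (value : Box → ℕ) (constReward : ℤ)
    (S : Finset Box) (I : Finset ι) (rem cre : ι → Finset Box) (cb : Box)
    (fee : ι → ℤ)
    (hfee_def : ∀ i ∈ I, fee i = (∑ b ∈ rem i, (value b : ℤ)) - ∑ b ∈ cre i, (value b : ℤ))
    (hfee_nonneg : ∀ i ∈ I, 0 ≤ fee i)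
    (hrem_sub : ∀ i ∈ I, rem i ⊆ S)
    (hrem_disj : ∀ i ∈ I, ∀ j ∈ I, i ≠ j → Disjoint (rem i) (rem j))
    (hcre_disj : ∀ i ∈ I, ∀ j ∈ I, i ≠ j → Disjoint (cre i) (cre j))
    (hcre_fresh : ∀ i ∈ I, Disjoint (cre i) (S \ I.biUnion rem))
    (hcb_fresh : cb ∉ (S \ I.biUnion rem) ∪ I.biUnion cre)
    (hcoinbase : (value cb : ℤ) = constReward + ∑ i ∈ I, fee i) :
    (∑ b ∈ (S \ I.biUnion rem) ∪ I.biUnion cre ∪ {cb}, (value b : ℤ))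
      = (∑ b ∈ S, (value b : ℤ)) + constReward :=
  stmt8_general value constReward S I rem cre cb fee hfee_def hrem_sub hrem_disj hcre_disj
    hcre_fresh hcb_fresh hcoinbase
end
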